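/- Let Z be a nonnegative random variable with mean μ̄ > 0 and variance σ̄². Then for p ≥ 1, E[Z^(1/p)] ≥ μ̄^(1/p) · (1 + σ̄²/μ̄²)^(1/p - 1). -/

import Mathlib

open MeasureTheory

lemma bern_neg {x β : ℝ} (hx : 0 < x) (hβ1 : -1 ≤ β) (hβ0 : β ≤ 0) :
    1 + β * (x - 1) ≤ x ^ β := by
  have hxpow : 0 < x ^ β := Real.rpow_pos_of_pos hx β
  rcases le_or_gt (1 + β * (x - 1)) 0 with h | h
  · linarith
  · have hb : x ^ (-β) ≤ 1 + (-β) * (x - 1) := by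
      have := rpow_one_add_le_one_add_mul_self (s := x - 1) (p := -β)
        (by linarith) (by linarith) (by linarith)
      simpa using this
    have hxnegpow : 0 < x ^ (-β) := Real.rpow_pos_of_pos hx _
    have hpos : 0 < 1 + (-β) * (x - 1) := lt_of_lt_of_le hxnegpow hb
    have key : (1 + β * (x - 1)) * (1 + (-β) * (x - 1)) ≤ 1 := by
      nlinarith [sq_nonneg (β * (x - 1))]
    have h1 : x ^ β * x ^ (-β) = 1 := by
      rw [← Real.rpow_add hx]; simp
    have hmain : (1 + β * (x - 1)) * (1 + (-β) * (x - 1))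
        ≤ x ^ β * (1 + (-β) * (x - 1)) := by
      calc (1 + β * (x - 1)) * (1 + (-β) * (x - 1)) ≤ 1 := key
        _ = x ^ β * x ^ (-β) := h1.symm
        _ ≤ x ^ β * (1 + (-β) * (x - 1)) :=
            mul_le_mul_of_nonneg_left hb (le_of_lt hxpow)
    exact le_of_mul_le_mul_right hmain hpos

lemma pointwise_bound {t t₀ α : ℝ} (htn : 0 ≤ t) (ht₀ : 0 < t₀) (hα0 : 0 < α) (hα1 : α ≤ 1) :
    (2 - α) * t₀ ^ (α - 1) * t - (1 - α) * t₀ ^ (α - 2) * t ^ 2 ≤ t ^ α := by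
  rcases eq_or_lt_of_le htn with h0 | ht
  · rw [← h0]
    simp [Real.zero_rpow (ne_of_gt hα0)]
  have hx : 0 < t / t₀ := div_pos ht ht₀
  have hbern := bern_neg hx (by linarith) (by linarith : α - 1 ≤ 0)
  have h2 : t₀ ^ (α - 2) * t₀ = t₀ ^ (α - 1) := by
    rw [show α - 1 = (α - 2) + 1 by ring, Real.rpow_add ht₀, Real.rpow_one]
  have hLHS : (2 - α) * t₀ ^ (α - 1) * t - (1 - α) * t₀ ^ (α - 2) * t ^ 2
      = t * t₀ ^ (α - 1) * (1 + (α - 1) * (t / t₀ - 1)) := by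
    field_simp
    linear_combination (-(1 - α) * t) * h2
  rw [hLHS]
  have hchain : t * t₀ ^ (α - 1) * (1 + (α - 1) * (t / t₀ - 1))
      ≤ t * t₀ ^ (α - 1) * (t / t₀) ^ (α - 1) := by
    apply mul_le_mul_of_nonneg_left hbern
    positivity
  refine hchain.trans (le_of_eq ?_)
  rw [Real.div_rpow ht.le ht₀.le]
  rw [show t * t₀ ^ (α - 1) * (t ^ (α - 1) / t₀ ^ (α - 1))
      = t * t ^ (α - 1) * (t₀ ^ (α - 1) / t₀ ^ (α - 1)) by ring,
    div_self (ne_of_gt (Real.rpow_pos_of_pos ht₀ _)), mul_one,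
    ← Real.rpow_one_add' htn (by intro h; nlinarith)]
  ring_nf

theorem expect_rpow_inv_lower_bound
    {Ω : Type*} [MeasurableSpace Ω] (P : Measure Ω) [IsProbabilityMeasure P]
    (p : ℝ) (hp : 1 ≤ p) (Z : Ω → ℝ) (hZmeas : Measurable Z)
    (hZnonneg : ∀ ω, 0 ≤ Z ω) (hZ2 : MemLp Z 2 P)
    (μbar σbar : ℝ) (hμ : 0 < μbar)
    (hmean : ∫ ω, Z ω ∂P = μbar)
    (hvar : ∫ ω, (Z ω - μbar) ^ 2 ∂P = σbar ^ 2) :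
    μbar ^ (1 / p) * (1 + σbar ^ 2 / μbar ^ 2) ^ (1 / p - 1)
      ≤ ∫ ω, Z ω ^ (1 / p) ∂P := by
  set α := 1 / p with hαdef
  have hα0 : 0 < α := by positivity
  have hα1 : α ≤ 1 := by
    rw [hαdef, div_le_one (by linarith)]; exact hp
  set t₀ : ℝ := (μbar ^ 2 + σbar ^ 2) / μbar with ht₀def
  have hσ : 0 ≤ σbar ^ 2 := sq_nonneg _
  have ht₀ : 0 < t₀ := by positivity
  have intZ : Integrable Z P := hZ2.integrable (by norm_num)
  have intZ2 : Integrable (fun ω => Z ω ^ 2) P := hZ2.integrable_sq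
  have EZ2 : ∫ ω, Z ω ^ 2 ∂P = μbar ^ 2 + σbar ^ 2 := by
    have e1 : Integrable (fun ω => 2 * μbar * Z ω) P := intZ.const_mul _
    have step : ∫ ω, (Z ω - μbar) ^ 2 ∂P
        = (∫ ω, Z ω ^ 2 ∂P) - (∫ ω, 2 * μbar * Z ω ∂P) + μbar ^ 2 := by
      calc ∫ ω, (Z ω - μbar) ^ 2 ∂P
          = ∫ ω, ((Z ω ^ 2 - 2 * μbar * Z ω) + μbar ^ 2) ∂P := by
            congr 1; funext ω; ring
        _ = (∫ ω, (Z ω ^ 2 - 2 * μbar * Z ω) ∂P) + ∫ _, μbar ^ 2 ∂P :=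
            integral_add (f := fun ω => Z ω ^ 2 - 2 * μbar * Z ω)
              (g := fun _ => μbar ^ 2) (by exact intZ2.sub e1) (integrable_const _)
        _ = (∫ ω, Z ω ^ 2 ∂P) - (∫ ω, 2 * μbar * Z ω ∂P) + μbar ^ 2 := by
            rw [integral_sub intZ2 e1]; simp
    rw [integral_const_mul, hmean] at step
    rw [hvar] at step
    linarith
  have measα : Measurable (fun ω => Z ω ^ α) :=
    (Real.continuous_rpow_const hα0.le).measurable.comp hZmeas
  have intZα : Integrable (fun ω => Z ω ^ α) P := by
    apply Integrable.mono' (g := fun ω => Z ω + 1)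
      (by simpa using intZ.add (integrable_const 1)) measα.aestronglyMeasurable
    filter_upwards with ω
    have hz := hZnonneg ω
    rw [Real.norm_of_nonneg (Real.rpow_nonneg hz _)]
    rcases le_or_gt (Z ω) 1 with h | h
    · have : Z ω ^ α ≤ 1 := Real.rpow_le_one hz h hα0.le
      linarith
    · have : Z ω ^ α ≤ Z ω ^ (1:ℝ) := Real.rpow_le_rpow_of_exponent_le h.le hα1
      rw [Real.rpow_one] at this
      linarith
  have hpt : ∀ ω, (2 - α) * t₀ ^ (α - 1) * Z ω - (1 - α) * t₀ ^ (α - 2) * Z ω ^ 2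
      ≤ Z ω ^ α := fun ω => pointwise_bound (hZnonneg ω) ht₀ hα0 hα1
  have hint : ∫ ω, ((2 - α) * t₀ ^ (α - 1) * Z ω - (1 - α) * t₀ ^ (α - 2) * Z ω ^ 2) ∂P
      ≤ ∫ ω, Z ω ^ α ∂P := by
    apply integral_mono _ intZα hpt
    exact (intZ.const_mul _).sub (intZ2.const_mul _)
  rw [integral_sub (intZ.const_mul _) (intZ2.const_mul _), integral_const_mul,
    integral_const_mul, hmean, EZ2] at hint
  refine le_trans (le_of_eq ?_) hint
  have hkey : μbar ^ 2 + σbar ^ 2 = t₀ * μbar := by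
    rw [ht₀def]; field_simp
  have h1 : t₀ ^ (α - 2) * t₀ = t₀ ^ (α - 1) := by
    rw [show α - 1 = (α - 2) + 1 by ring, Real.rpow_add ht₀, Real.rpow_one]
  have hrhs : (2 - α) * t₀ ^ (α - 1) * μbar - (1 - α) * t₀ ^ (α - 2) * (μbar ^ 2 + σbar ^ 2)
      = μbar * t₀ ^ (α - 1) := by
    rw [hkey]; linear_combination (-(1 - α) * μbar) * h1
  rw [hrhs]
  have ht₀eq : t₀ = μbar * (1 + σbar ^ 2 / μbar ^ 2) := by
    rw [ht₀def]; field_simp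
  rw [ht₀eq, Real.mul_rpow hμ.le (by positivity)]
  rw [show μbar * (μbar ^ (α-1) * (1 + σbar^2/μbar^2) ^ (α-1))
      = (μbar * μbar ^ (α-1)) * (1 + σbar^2/μbar^2) ^ (α-1) by ring]
  congr 1
  rw [← Real.rpow_one_add' hμ.le (by simpa using ne_of_gt hα0)]
  ring_nf
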